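/- In the grammar automaton generated from a context-free grammar in Greibach normal form, for all finite languages S, T ∈ P_ω(X*): ô(ST) = ô(S) ∧ ô(T), and (ST)_a = S_a·T ∪ i(ô(S))·T_a. -/

import Mathlib

/-- Language concatenation `S·T = { st | s ∈ S, t ∈ T }`. -/
def lcat {Y : Type} (S T : Set (List Y)) : Set (List Y) :=
  Set.image2 (· ++ ·) S T

/-- `i : B → P(Y*)`, sending `1` to `{ε}` and `0` to `∅` (Booleans as `Prop`). -/
def iB {Y : Type} (p : Prop) : Set (List Y) := {w | w = [] ∧ p}

section GrammarAutomaton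

variable {X A : Type} (o : X → Prop) (δ : X → A → Set (List X))

/-- Output `ô({s})` of a single word of nonterminals:
`ô({ε}) = 1`, `ô({xw}) = o(x) ∧ ô({w})`. -/
def oWord : List X → Prop
  | [] => True
  | x :: w => o x ∧ oWord w

/-- Derivative `{s}_a` of a single word of nonterminals:
`{ε}_a = ∅`, `{xw}_a = x_a·{w} ∪ i(o(x))·{w}_a`. -/
def dWord : List X → A → Set (List X)
  | [], _ => ∅
  | x :: w, a => lcat (δ x a) {w} ∪ lcat (iB (o x)) (dWord w a)

/-- Output `ô(S) = ⋁_{s ∈ S} ô({s})` of a language of words of nonterminals. -/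
def oSet (S : Set (List X)) : Prop := ∃ s ∈ S, oWord o s

/-- Derivative `S_a = ⋃_{s ∈ S} {s}_a`. -/
def dSet (S : Set (List X)) (a : A) : Set (List X) :=
  ⋃ s ∈ S, dWord o δ s a

/-- Iterated word derivative: `S_ε = S`, `S_{aw} = (S_a)_w`. -/
def dSetWord (S : Set (List X)) : List A → Set (List X)
  | [] => S
  | a :: w => dSetWord (dSet o δ S a) w

/-- One derivation step of the grammar in Greibach normal form determined by
`(o, δ)`: productions are `x → ε` when `o x` holds, and `x → aw` when `w ∈ δ x a`. -/
inductive GStep : List (X ⊕ A) → List (X ⊕ A) → Prop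
  | eps (l r : List (X ⊕ A)) (x : X) (h : o x) :
      GStep (l ++ Sum.inl x :: r) (l ++ r)
  | prod (l r : List (X ⊕ A)) (x : X) (a : A) (w : List X) (h : w ∈ δ x a) :
      GStep (l ++ Sum.inl x :: r) (l ++ Sum.inr a :: w.map Sum.inl ++ r)

/-- Derivability `⇒*`: the reflexive–transitive closure of single derivation steps. -/
def GDerives : List (X ⊕ A) → List (X ⊕ A) → Prop :=
  Relation.ReflTransGen (GStep o δ)

end GrammarAutomaton

/-! For single words, `{st}_a = {s}_a·{t} ∪ i(ô({s}))·{t}_a` follows by induction on `s` from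
the defining clause for `{xw}_a`, using associativity of concatenation and `i(p ∧ q) = i(p)·i(q)`;
the rule for languages is its union over `s ∈ S`, `t ∈ T`. -/

section Concatenation

variable {Y : Type}

lemma mem_lcat {S T : Set (List Y)} {u : List Y} :
    u ∈ lcat S T ↔ ∃ s ∈ S, ∃ t ∈ T, s ++ t = u := Iff.rfl

lemma mem_lcat_singleton {S : Set (List Y)} {t u : List Y} :
    u ∈ lcat S {t} ↔ ∃ s ∈ S, s ++ t = u := by
  simp [lcat]

lemma mem_iB_lcat {p : Prop} {T : Set (List Y)} {u : List Y} :
    u ∈ lcat (iB p) T ↔ p ∧ u ∈ T := by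
  simp [lcat, iB, and_comm]

lemma lcat_assoc (S T U : Set (List Y)) : lcat (lcat S T) U = lcat S (lcat T U) :=
  Set.image2_assoc fun _ _ _ => List.append_assoc _ _ _

lemma lcat_union_left (S T U : Set (List Y)) : lcat (S ∪ T) U = lcat S U ∪ lcat T U :=
  Set.image2_union_left

lemma lcat_union_right (S T U : Set (List Y)) : lcat S (T ∪ U) = lcat S T ∪ lcat S U :=
  Set.image2_union_right

lemma lcat_empty_left (T : Set (List Y)) : lcat ∅ T = ∅ :=
  Set.image2_empty_left

lemma lcat_singleton_singleton (s t : List Y) : lcat {s} {t} = {s ++ t} :=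
  Set.image2_singleton

lemma iB_true_lcat (T : Set (List Y)) : lcat (iB True) T = T := by
  ext u
  simp [mem_iB_lcat]

lemma iB_and (p q : Prop) : (iB (p ∧ q) : Set (List Y)) = lcat (iB p) (iB q) := by
  ext u
  rw [mem_iB_lcat]
  simp only [iB, Set.mem_ofPred_eq]
  tauto

end Concatenation

section GrammarAutomaton

variable {X A : Type} (o : X → Prop) (δ : X → A → Set (List X))

lemma oWord_append (s t : List X) : oWord o (s ++ t) ↔ oWord o s ∧ oWord o t := by
  induction s with
  | nil => simp [oWord]
  | cons x s ih => simp [oWord, ih, and_assoc]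

lemma dWord_append (s t : List X) (a : A) :
    dWord o δ (s ++ t) a =
      lcat (dWord o δ s a) {t} ∪ lcat (iB (oWord o s)) (dWord o δ t a) := by
  induction s with
  | nil => simp only [List.nil_append, dWord, oWord, lcat_empty_left, iB_true_lcat,
      Set.empty_union]
  | cons x s ih =>
    simp only [List.cons_append, dWord, oWord, ih, lcat_union_left, lcat_union_right,
      lcat_assoc, lcat_singleton_singleton, iB_and, Set.union_assoc]

theorem oSet_lcat (S T : Set (List X)) : oSet o (lcat S T) ↔ oSet o S ∧ oSet o T := by
  simp only [oSet, mem_lcat]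
  constructor
  · rintro ⟨_, ⟨s, hs, t, ht, rfl⟩, hst⟩
    rw [oWord_append] at hst
    exact ⟨⟨s, hs, hst.1⟩, ⟨t, ht, hst.2⟩⟩
  · rintro ⟨⟨s, hs, hos⟩, ⟨t, ht, hot⟩⟩
    exact ⟨s ++ t, ⟨s, hs, t, ht, rfl⟩, (oWord_append o s t).2 ⟨hos, hot⟩⟩

theorem dSet_lcat (S T : Set (List X)) (a : A) :
    dSet o δ (lcat S T) a = lcat (dSet o δ S a) T ∪ lcat (iB (oSet o S)) (dSet o δ T a) := by
  ext u
  rw [Set.mem_union, mem_iB_lcat]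
  simp only [dSet, oSet, Set.mem_iUnion, exists_prop, mem_lcat]
  constructor
  · rintro ⟨_, ⟨s, hs, t, ht, rfl⟩, hu⟩
    rw [dWord_append, Set.mem_union, mem_lcat_singleton, mem_iB_lcat] at hu
    rcases hu with ⟨w, hw, rfl⟩ | ⟨hos, hu⟩
    · exact .inl ⟨w, ⟨s, hs, hw⟩, t, ht, rfl⟩
    · exact .inr ⟨⟨s, hs, hos⟩, t, ht, hu⟩
  · rintro (⟨w, ⟨s, hs, hw⟩, t, ht, rfl⟩ | ⟨⟨s, hs, hos⟩, t, ht, hu⟩)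
    · refine ⟨s ++ t, ⟨s, hs, t, ht, rfl⟩, ?_⟩
      rw [dWord_append]
      exact .inl (mem_lcat_singleton.2 ⟨w, hw, rfl⟩)
    · refine ⟨s ++ t, ⟨s, hs, t, ht, rfl⟩, ?_⟩
      rw [dWord_append]
      exact .inr (mem_iB_lcat.2 ⟨hos, hu⟩)

end GrammarAutomaton

theorem product_rule_sets_general {X A : Type}
    (o : X → Prop) (δ : X → A → Set (List X))
    (S T : Set (List X)) (a : A) :
    (oSet o (lcat S T) ↔ oSet o S ∧ oSet o T) ∧
      dSet o δ (lcat S T) a =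
        lcat (dSet o δ S a) T ∪ lcat (iB (oSet o S)) (dSet o δ T a) :=
  ⟨oSet_lcat o S T, dSet_lcat o δ S T a⟩

/-- Product rule for finite languages: in the grammar automaton,
`ô(ST) = ô(S) ∧ ô(T)` and `(ST)_a = S_a·T ∪ i(ô(S))·T_a`. -/
theorem product_rule_sets {X A : Type} [Finite X]
    (o : X → Prop) (δ : X → A → Set (List X))
    (hfin : ∀ x a, (δ x a).Finite)
    (S T : Set (List X)) (hS : S.Finite) (hT : T.Finite) (a : A) :
    (oSet o (lcat S T) ↔ oSet o S ∧ oSet o T) ∧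
      dSet o δ (lcat S T) a =
        lcat (dSet o δ S a) T ∪ lcat (iB (oSet o S)) (dSet o δ T a) :=
  product_rule_sets_general o δ S T a
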